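/- Let C be an additive category with biproducts and let g : B → C be a morphism, X an object, t : X → C a morphism. If the induced morphism (g, t) : B ⊕ X → C is a split epimorphism and C is indecomposable with local endomorphism ring, then g is a split epimorphism or t is a split epimorphism. -/

import Mathlib

open CategoryTheory CategoryTheory.Limits

/-!
Writing `s` for a section of `(g, t)`, the identity of `Z` splits as
`(s ≫ fst) ≫ g + (s ≫ snd) ≫ t`. In the local ring `End Z` one of the two summands is then a
unit, and an endomorphism `r ≫ f` that is an isomorphism makes `f` a split epimorphism.
-/

theorem exists_comp_eq_id_of_isUnit_comp {C : Type*} [Category C] {Y Z : C} (r : Z ⟶ Y)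
    (f : Y ⟶ Z) (h : IsUnit (End.of (r ≫ f))) : ∃ r' : Z ⟶ Y, r' ≫ f = 𝟙 Z :=
  have := (isUnit_iff_isIso _).mp h
  ⟨inv (r ≫ f) ≫ r, by rw [Category.assoc, IsIso.inv_hom_id]⟩

theorem comp_biprod_desc {C : Type*} [Category C] [Preadditive C] [HasBinaryBiproducts C]
    {B X Z W : C} (s : W ⟶ B ⊞ X) (g : B ⟶ Z) (t : X ⟶ Z) :
    s ≫ biprod.desc g t = (s ≫ biprod.fst) ≫ g + (s ≫ biprod.snd) ≫ t := by
  rw [biprod.desc_eq, Preadditive.comp_add, Category.assoc, Category.assoc]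

/-- If `(g, t) : B ⊞ X ⟶ Z` is a split epimorphism and `Z` has local endomorphism ring,
then `g` is a split epimorphism or `t` is a split epimorphism. -/
theorem split_epi_from_biprod_local {C : Type*} [Category C] [Preadditive C]
    [Limits.HasBinaryBiproducts C] {B X Z : C} (g : B ⟶ Z) (t : X ⟶ Z)
    (hLocal : IsLocalRing (End Z))
    (h : ∃ s : Z ⟶ B ⊞ X, s ≫ Limits.biprod.desc g t = 𝟙 Z) :
    (∃ s : Z ⟶ B, s ≫ g = 𝟙 Z) ∨ (∃ s : Z ⟶ X, s ≫ t = 𝟙 Z) := by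
  obtain ⟨s, hs⟩ := h
  have hsum : End.of ((s ≫ biprod.fst) ≫ g) + End.of ((s ≫ biprod.snd) ≫ t) = 1 := by
    rw [← comp_biprod_desc, hs, End.one_def]
  exact (IsLocalRing.isUnit_or_isUnit_of_add_one hsum).imp
    (exists_comp_eq_id_of_isUnit_comp _ g) (exists_comp_eq_id_of_isUnit_comp _ t)
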